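/- Let G be an unmixed chordal graph on the vertex set [n], and let F_1,...,F_m be the facets of the clique complex Δ(G) which admit a free vertex. Then [n] is the disjoint union of F_1,...,F_m. -/

import Mathlib

set_option maxHeartbeats 1000000
set_option synthInstance.maxHeartbeats 400000

open MvPolynomial

/-- A simple graph is chordal if every cycle of length > 3 has a chord, i.e. an edge of the
graph joining two vertices of the cycle which is not an edge of the cycle. -/
def SimpleGraph.IsChordal {V : Type*} (G : SimpleGraph V) : Prop :=
  ∀ (v : V) (c : G.Walk v v), c.IsCycle → 3 < c.length →
    ∃ u w, u ∈ c.support ∧ w ∈ c.support ∧ G.Adj u w ∧ s(u, w) ∉ c.edges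

/-- `F` is a facet of the clique complex `Δ(G)`, i.e. a maximal clique of `G`. -/
def SimpleGraph.IsFacet {V : Type*} (G : SimpleGraph V) (F : Finset V) : Prop :=
  G.IsClique (F : Set V) ∧ ∀ F' : Finset V, G.IsClique (F' : Set V) → F ⊆ F' → F' = F

/-- `v` is a free vertex of the facet `F` of `Δ(G)`: it belongs to no other facet. -/
def SimpleGraph.IsFreeVertex {V : Type*} (G : SimpleGraph V) (F : Finset V) (v : V) : Prop :=
  v ∈ F ∧ ∀ F' : Finset V, G.IsFacet F' → v ∈ F' → F' = F

/-- `F` is a facet of `Δ(G)` admitting a free vertex. -/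
def SimpleGraph.IsFreeFacet {V : Type*} (G : SimpleGraph V) (F : Finset V) : Prop :=
  G.IsFacet F ∧ ∃ v, G.IsFreeVertex F v

/-- A vertex cover of `G`: a set of vertices meeting every edge. -/
def SimpleGraph.IsVertexCover' {V : Type*} (G : SimpleGraph V) (C : Finset V) : Prop :=
  ∀ u w, G.Adj u w → u ∈ C ∨ w ∈ C

/-- A minimal vertex cover of `G`: no proper subset is a vertex cover. -/
def SimpleGraph.IsMinVertexCover {V : Type*} (G : SimpleGraph V) (C : Finset V) : Prop :=
  G.IsVertexCover' C ∧ ∀ C' ⊆ C, G.IsVertexCover' C' → C' = C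

/-- `G` is unmixed: all minimal vertex covers of `G` have the same cardinality. -/
def SimpleGraph.Unmixed {V : Type*} (G : SimpleGraph V) : Prop :=
  ∀ C C' : Finset V, G.IsMinVertexCover C → G.IsMinVertexCover C' → C.card = C'.card

/-!
The facets of `Δ(G)` with a free vertex are exactly the closed neighbourhoods `N[v]` of the
simplicial vertices `v` of `G`, and minimal vertex covers are the complements of maximal
independent sets, so `G` is unmixed iff it is well-covered: all its maximal independent sets
have the same size.

In such a graph every maximal independent set meets each simplex `N[v]` in exactly one vertex.
A vertex `z` in two simplices could then be traded, inside a maximal independent set, for the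
two simplicial vertices, so distinct simplices are disjoint. For the covering, remove a simplex
`F = N[v]` (Dirac's lemma): the rest `A'` is again well-covered, so by induction every vertex
of `A'` lies in a simplex `S` of `A'`. Using chords of four-cycles, some free vertex of `S` has
no neighbour in `F`, hence is simplicial in `G` with closed neighbourhood `S`: otherwise an
independent set dominating `S` would extend to a maximal independent set missing `S`.
-/

open scoped Classical

namespace SimpleGraph

variable {V : Type*} {G : SimpleGraph V}

lemma isIndepSet_insert_of_forall {S : Set V} {v : V} (hS : G.IsIndepSet S)
    (hv : ∀ x ∈ S, ¬G.Adj v x) : G.IsIndepSet (insert v S) :=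
  hS.insert fun x hx _ => ⟨hv x hx, fun h => hv x hx h.symm⟩

namespace Walk

variable {s t : V}

lemma exists_shorter_of_not_isChordless {p : G.Walk s t} (hp : ¬p.IsChordless) :
    ∃ q : G.Walk s t, q.length < p.length ∧ q.support ⊆ p.support := by
  simp only [isChordless_iff_forall_mem_edges, not_forall] at hp
  obtain ⟨u, w, hu, hw, huw, hnot⟩ := hp
  induction p with
  | nil =>
    simp only [support_nil, List.mem_singleton] at hu hw
    subst hu hw
    exact absurd huw G.irrefl
  | @cons s s' t h p ih =>
    have shortcut : ∀ {x}, x ∈ p.support → G.Adj s x → s(s, x) ∉ (cons h p).edges →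
        ∃ q : G.Walk s t, q.length < (cons h p).length ∧ q.support ⊆ (cons h p).support := by
      intro x hx hsx hnot
      refine ⟨cons hsx (p.dropUntil x hx), ?_, ?_⟩
      · have hpos : (p.takeUntil x hx).length ≠ 0 := fun h0 => by
          cases eq_of_length_eq_zero h0
          simp at hnot
        have := congrArg length (p.take_spec hx)
        rw [length_append] at this
        simp only [length_cons]
        omega
      · simpa using List.cons_subset_cons _ (p.support_dropUntil_subset_support hx)
    rw [support_cons, List.mem_cons] at hu hw
    rcases hu with rfl | hu <;> rcases hw with rfl | hw
    · exact absurd huw G.irrefl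
    · exact shortcut hw huw hnot
    · exact shortcut hu huw.symm (by rwa [Sym2.eq_swap])
    · obtain ⟨q, hlen, hsub⟩ := ih hu hw (fun h' => hnot (by simp [h']))
      exact ⟨cons h q, by simpa using hlen, by simpa using List.cons_subset_cons _ hsub⟩

lemma exists_isPath_isChordless (p : G.Walk s t) :
    ∃ q : G.Walk s t, q.IsPath ∧ q.IsChordless ∧ q.support ⊆ p.support := by
  induction hl : p.length using Nat.strong_induction_on generalizing p with
  | _ l ih =>
  by_cases hpath : p.IsPath
  · by_cases hchord : p.IsChordless
    · exact ⟨p, hpath, hchord, List.Subset.refl _⟩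
    obtain ⟨q, hlen, hsub⟩ := exists_shorter_of_not_isChordless hchord
    obtain ⟨r, hr, hr', hsub'⟩ := ih _ (hl ▸ hlen) q rfl
    exact ⟨r, hr, hr', List.Subset.trans hsub' hsub⟩
  · have hlen : p.bypass.length < p.length := by
      by_contra! hle
      exact hpath (p.bypass_eq_self_of_length_le_length_bypass hle ▸ p.bypass_isPath)
    obtain ⟨r, hr, hr', hsub'⟩ := ih _ (hl ▸ hlen) p.bypass rfl
    exact ⟨r, hr, hr', List.Subset.trans hsub' p.support_bypass_subset_support⟩

end Walk

namespace IsChordal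

/-- The chordless path from `s` to `t` closes up through `a` to a cycle of length at least four,
whose only possible chords issue from `a`. -/
theorem exists_adj_of_walk (hG : G.IsChordal) {a s t : V} (p : G.Walk s t) (has : G.Adj a s)
    (hat : G.Adj a t) (hst : s ≠ t) (hnst : ¬G.Adj s t) (ha : a ∉ p.support) :
    ∃ x ∈ p.support, x ≠ s ∧ x ≠ t ∧ G.Adj a x := by
  by_contra! hno
  obtain ⟨q, hq, hqc, hsub⟩ := p.exists_isPath_isChordless
  have haq : a ∉ q.support := fun h => ha (hsub h)
  have hlen : 2 ≤ q.length := by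
    by_contra! h
    interval_cases hl : q.length
    · exact hst (Walk.eq_of_length_eq_zero hl)
    · exact hnst (Walk.adj_of_length_eq_one hl)
  have hcycle : (Walk.cons has (q.concat hat.symm)).IsCycle := by
    refine (Walk.cons_isCycle_iff _ _).2 ⟨hq.concat haq _, fun h => ?_⟩
    simp only [Walk.edges_concat, List.concat_eq_append, List.mem_append, List.mem_singleton,
      Sym2.eq_iff] at h
    rcases h with h | ⟨rfl, -⟩ | ⟨-, rfl⟩
    · exact haq (q.fst_mem_support_of_mem_edges h)
    · exact haq q.end_mem_support
    · exact hst rfl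
  obtain ⟨u, w, hu, hw, huw, hnot⟩ :=
    hG a _ hcycle (by simp only [Walk.length_cons, Walk.length_concat]; omega)
  have hapex : ∀ x ∈ q.support, G.Adj a x →
      s(a, x) ∈ (Walk.cons has (q.concat hat.symm)).edges := by
    intro x hx hax
    by_cases hxs : x = s
    · simp [hxs]
    by_cases hxt : x = t
    · simp [hxt, Walk.edges_concat, Sym2.eq_swap]
    exact absurd hax (hno x (hsub hx) hxs hxt)
  simp only [Walk.support_cons, Walk.support_concat, List.mem_cons, List.mem_append,
    List.not_mem_nil, or_false] at hu hw
  rcases hu with rfl | hu | rfl <;> rcases hw with rfl | hw | rfl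
  all_goals first
    | exact G.irrefl huw
    | exact hnot (hapex _ hw huw)
    | exact hnot (Sym2.eq_swap ▸ hapex _ hu huw.symm)
    | exact hnot (by simp [Walk.edges_concat, hqc.mem_edges hu hw huw])

theorem adj_or_adj_of_cycle_four (hG : G.IsChordal) {a b c d : V} (hab : G.Adj a b)
    (hbc : G.Adj b c) (hcd : G.Adj c d) (hda : G.Adj d a) (hac : a ≠ c) (hbd : b ≠ d) :
    G.Adj a c ∨ G.Adj b d := by
  by_contra! h
  obtain ⟨x, hx, hxa, hxc, hbx⟩ := hG.exists_adj_of_walk (.cons hda.symm (.cons hcd.symm .nil))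
    hab.symm hbc hac h.1 (by simp [hab.ne', hbc.ne, hbd])
  simp only [Walk.support_cons, Walk.support_nil, List.mem_cons, List.not_mem_nil, or_false] at hx
  rcases hx with rfl | rfl | rfl
  exacts [hxa rfl, h.2 hbx, hxc rfl]

theorem exists_isIndepSet_dominating (hG : G.IsChordal) {K W : Finset V}
    (hK : G.IsClique (K : Set V)) (hKW : Disjoint K W)
    (hdom : ∀ k ∈ K, ∃ w ∈ W, G.Adj k w) :
    ∃ J ⊆ W, G.IsIndepSet (J : Set V) ∧ ∀ k ∈ K, ∃ j ∈ J, G.Adj k j := by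
  induction K using Finset.induction_on with
  | empty => exact ⟨∅, Finset.empty_subset _, by simp, by simp⟩
  | @insert x K hxK ih =>
    rw [Finset.coe_insert] at hK
    obtain ⟨J, hJW, hJ, hJdom⟩ := ih (hK.subset (Set.subset_insert _ _))
      (Finset.disjoint_insert_left.1 hKW).2 fun k hk => hdom k (Finset.mem_insert_of_mem hk)
    by_cases hx : ∃ j ∈ J, G.Adj x j
    · exact ⟨J, hJW, hJ, by simpa [hx] using hJdom⟩
    push Not at hx
    obtain ⟨y, hyW, hxy⟩ := hdom x (Finset.mem_insert_self x K)
    refine ⟨insert y {j ∈ J | ¬G.Adj y j},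
      Finset.insert_subset hyW ((Finset.filter_subset _ _).trans hJW), ?_, ?_⟩
    · rw [Finset.coe_insert, Finset.coe_filter]
      exact isIndepSet_insert_of_forall (hJ.mono fun j hj => hj.1) fun j hj => hj.2
    · rw [Finset.forall_mem_insert]
      refine ⟨⟨y, Finset.mem_insert_self _ _, hxy⟩, fun k hk => ?_⟩
      obtain ⟨j, hj, hkj⟩ := hJdom k hk
      by_cases hyj : G.Adj y j
      · -- the four-cycle `x y j k` has no chord `x j`, so it has the chord `y k`
        have hxk : G.Adj k x := hK (Set.mem_insert_of_mem _ hk) (Set.mem_insert _ _)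
          (ne_of_mem_of_not_mem hk hxK)
        have hxj : x ≠ j := fun h =>
          Finset.disjoint_left.1 hKW (Finset.mem_insert_self x K) (h ▸ hJW hj)
        have hyk : y ≠ k := fun h => Finset.disjoint_left.1 hKW
          (Finset.mem_insert_of_mem hk) (h ▸ hyW)
        have hyk' := (hG.adj_or_adj_of_cycle_four hxy hyj hkj.symm hxk hxj hyk).resolve_left
          (hx j hj)
        exact ⟨y, Finset.mem_insert_self _ _, hyk'.symm⟩
      · exact ⟨j, Finset.mem_insert_of_mem (Finset.mem_filter.2 ⟨hj, hyj⟩), hkj⟩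

theorem exists_adj_forall_of_isClique (hG : G.IsChordal) {K W : Finset V}
    (hK : G.IsClique (K : Set V)) (hW : G.IsClique (W : Set V)) (hKW : Disjoint K W)
    (hK₀ : K.Nonempty) (hdom : ∀ k ∈ K, ∃ w ∈ W, G.Adj k w) :
    ∃ w ∈ W, ∀ k ∈ K, G.Adj k w := by
  obtain ⟨J, hJW, hJ, hJdom⟩ := hG.exists_isIndepSet_dominating hK hKW hdom
  obtain ⟨k₀, hk₀⟩ := hK₀
  obtain ⟨w, hw, -⟩ := hJdom k₀ hk₀
  refine ⟨w, hJW hw, fun k hk => ?_⟩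
  obtain ⟨j, hj, hkj⟩ := hJdom k hk
  obtain rfl : j = w := by
    by_contra hjw
    exact hJ hj hw hjw (hW (hJW hj) (hJW hw) hjw)
  exact hkj

end IsChordal

section IndependentSets

variable (G) in
noncomputable def closedNbhdIn (A : Finset V) (v : V) : Finset V :=
  insert v {x ∈ A | G.Adj v x}

variable (G) in
def IsSimplicialIn (A : Finset V) (v : V) : Prop :=
  v ∈ A ∧ G.IsClique (G.closedNbhdIn A v : Set V)

variable (G) in
/-- Maximal independent sets of the subgraph induced on `A`, as independent dominating sets. -/
def IsMaximalIndepSetIn (A S : Finset V) : Prop :=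
  S ⊆ A ∧ G.IsIndepSet (S : Set V) ∧ ∀ x ∈ A, x ∉ S → ∃ y ∈ S, G.Adj x y

variable (G) in
def WellCoveredOn (A : Finset V) : Prop :=
  ∀ S T, G.IsMaximalIndepSetIn A S → G.IsMaximalIndepSetIn A T → S.card = T.card

variable {A S T : Finset V} {v w x : V}

lemma mem_closedNbhdIn : x ∈ G.closedNbhdIn A v ↔ x = v ∨ x ∈ A ∧ G.Adj v x := by
  simp [closedNbhdIn]

lemma self_mem_closedNbhdIn : v ∈ G.closedNbhdIn A v :=
  Finset.mem_insert_self _ _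

lemma closedNbhdIn_subset (hv : v ∈ A) : G.closedNbhdIn A v ⊆ A :=
  Finset.insert_subset hv (Finset.filter_subset _ _)

lemma IsClique.subset_closedNbhdIn {K : Finset V} (hK : G.IsClique (K : Set V)) (hKA : K ⊆ A)
    (hv : v ∈ K) : K ⊆ G.closedNbhdIn A v := fun x hx =>
  mem_closedNbhdIn.2 <| (eq_or_ne x v).imp id fun hxv => ⟨hKA hx, hK hv hx hxv.symm⟩

lemma IsSimplicialIn.closedNbhdIn_subset_of_adj (hv : G.IsSimplicialIn A v) (hw : w ∈ A)
    (h : G.Adj v w) : G.closedNbhdIn A v ⊆ G.closedNbhdIn A w :=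
  hv.2.subset_closedNbhdIn (closedNbhdIn_subset hv.1) (mem_closedNbhdIn.2 (.inr ⟨hw, h⟩))

lemma IsSimplicialIn.closedNbhdIn_eq_of_adj (hv : G.IsSimplicialIn A v)
    (hw : G.IsSimplicialIn A w) (h : G.Adj v w) : G.closedNbhdIn A v = G.closedNbhdIn A w :=
  (hv.closedNbhdIn_subset_of_adj hw.1 h).antisymm (hw.closedNbhdIn_subset_of_adj hv.1 h.symm)

lemma exists_isMaximalIndepSetIn_superset (hSA : S ⊆ A) (hS : G.IsIndepSet (S : Set V)) :
    ∃ T, S ⊆ T ∧ G.IsMaximalIndepSetIn A T := by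
  obtain ⟨T, hST, hT⟩ := Finset.exists_le_maximal
    (A.powerset.filter fun T : Finset V => G.IsIndepSet (T : Set V))
    (Finset.mem_filter.2 ⟨Finset.mem_powerset.2 hSA, hS⟩)
  simp only [Finset.mem_filter, Finset.mem_powerset] at hT
  refine ⟨T, hST, hT.1.1, hT.1.2, fun x hx hxT => ?_⟩
  by_contra! hno
  have hins := hT.2 (y := insert x T)
    ⟨Finset.insert_subset hx hT.1.1, by
      rw [Finset.coe_insert]
      exact isIndepSet_insert_of_forall hT.1.2 fun y hy h => hno y hy h⟩
    (Finset.subset_insert _ _)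
  exact hxT (hins (Finset.mem_insert_self x T))

lemma IsMaximalIndepSetIn.exists_mem_closedNbhdIn (hT : G.IsMaximalIndepSetIn A T)
    (hv : v ∈ A) : ∃ w ∈ T, w ∈ G.closedNbhdIn A v := by
  by_cases hvT : v ∈ T
  · exact ⟨v, hvT, self_mem_closedNbhdIn⟩
  obtain ⟨w, hwT, hvw⟩ := hT.2.2 v hv hvT
  exact ⟨w, hwT, mem_closedNbhdIn.2 (.inr ⟨hT.1 hwT, hvw⟩)⟩

lemma WellCoveredOn.card_le (hA : G.WellCoveredOn A) (hT : G.IsMaximalIndepSetIn A T)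
    (hSA : S ⊆ A) (hS : G.IsIndepSet (S : Set V)) : S.card ≤ T.card := by
  obtain ⟨T', hST', hT'⟩ := exists_isMaximalIndepSetIn_superset hSA hS
  exact hA T' T hT' hT ▸ Finset.card_le_card hST'

lemma WellCoveredOn.isMaximalIndepSetIn_of_card_le (hA : G.WellCoveredOn A)
    (hT : G.IsMaximalIndepSetIn A T) (hSA : S ⊆ A) (hS : G.IsIndepSet (S : Set V))
    (hcard : T.card ≤ S.card) : G.IsMaximalIndepSetIn A S := by
  obtain ⟨T', hST', hT'⟩ := exists_isMaximalIndepSetIn_superset hSA hS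
  rwa [← Finset.eq_of_subset_of_card_le hST' (hA T' T hT' hT ▸ hcard)] at hT'

lemma not_adj_of_mem_sdiff_closedNbhdIn (hx : x ∈ A \ G.closedNbhdIn A v) : ¬G.Adj v x :=
  fun h => (Finset.mem_sdiff.1 hx).2 (mem_closedNbhdIn.2 (.inr ⟨(Finset.mem_sdiff.1 hx).1, h⟩))

lemma IsMaximalIndepSetIn.insert_of_sdiff_closedNbhdIn (hv : v ∈ A)
    (hS : G.IsMaximalIndepSetIn (A \ G.closedNbhdIn A v) S) :
    G.IsMaximalIndepSetIn A (insert v S) := by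
  refine ⟨Finset.insert_subset hv (hS.1.trans Finset.sdiff_subset), ?_, fun x hx hxS => ?_⟩
  · rw [Finset.coe_insert]
    exact isIndepSet_insert_of_forall hS.2.1 fun y hy =>
      not_adj_of_mem_sdiff_closedNbhdIn (hS.1 hy)
  by_cases hxN : x ∈ G.closedNbhdIn A v
  · rcases mem_closedNbhdIn.1 hxN with rfl | ⟨-, hvx⟩
    · exact absurd (Finset.mem_insert_self x S) hxS
    · exact ⟨v, Finset.mem_insert_self v S, hvx.symm⟩
  · obtain ⟨y, hy, hxy⟩ :=
      hS.2.2 x (Finset.mem_sdiff.2 ⟨hx, hxN⟩) (hxS ∘ Finset.mem_insert_of_mem)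
    exact ⟨y, Finset.mem_insert_of_mem hy, hxy⟩

lemma WellCoveredOn.sdiff_closedNbhdIn (hA : G.WellCoveredOn A) (hv : v ∈ A) :
    G.WellCoveredOn (A \ G.closedNbhdIn A v) := by
  intro S T hS hT
  have hvS : v ∉ S := fun h => (Finset.mem_sdiff.1 (hS.1 h)).2 self_mem_closedNbhdIn
  have hvT : v ∉ T := fun h => (Finset.mem_sdiff.1 (hT.1 h)).2 self_mem_closedNbhdIn
  have := hA _ _ (hS.insert_of_sdiff_closedNbhdIn hv) (hT.insert_of_sdiff_closedNbhdIn hv)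
  rwa [Finset.card_insert_of_notMem hvS, Finset.card_insert_of_notMem hvT,
    Nat.add_right_cancel_iff] at this

/-- `T` meets the simplex `N[v]` in a single vertex, and trading it for `v` keeps `T` maximal. -/
lemma IsMaximalIndepSetIn.sdiff_closedNbhdIn (hA : G.WellCoveredOn A)
    (hv : G.IsSimplicialIn A v) (hT : G.IsMaximalIndepSetIn A T) :
    G.IsMaximalIndepSetIn (A \ G.closedNbhdIn A v) (T \ G.closedNbhdIn A v) := by
  set N := G.closedNbhdIn A v
  obtain ⟨c, hcT, hcN⟩ := hT.exists_mem_closedNbhdIn hv.1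
  have hTN : T ∩ N = {c} := by
    refine Finset.eq_singleton_iff_unique_mem.2
      ⟨Finset.mem_inter.2 ⟨hcT, hcN⟩, fun x hx => ?_⟩
    rw [Finset.mem_inter] at hx
    by_contra hxc
    exact hT.2.1 hx.1 hcT hxc (hv.2 hx.2 hcN hxc)
  have hTN_sub : T \ N ⊆ A \ N := Finset.sdiff_subset_sdiff hT.1 subset_rfl
  have hTN_indep : G.IsIndepSet (↑(T \ N) : Set V) :=
    hT.2.1.mono (Finset.coe_subset.2 Finset.sdiff_subset)
  have hvTN : v ∉ T \ N := fun h => (Finset.mem_sdiff.1 h).2 self_mem_closedNbhdIn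
  have hins : G.IsMaximalIndepSetIn A (insert v (T \ N)) := by
    refine hA.isMaximalIndepSetIn_of_card_le hT
      (Finset.insert_subset hv.1 (Finset.sdiff_subset.trans hT.1)) ?_ ?_
    · rw [Finset.coe_insert]
      exact isIndepSet_insert_of_forall hTN_indep fun y hy =>
        not_adj_of_mem_sdiff_closedNbhdIn (hTN_sub hy)
    · have := Finset.card_sdiff_add_card_inter T N
      rw [hTN, Finset.card_singleton] at this
      rw [Finset.card_insert_of_notMem hvTN]
      omega
  refine ⟨hTN_sub, hTN_indep, fun x hx hxT => ?_⟩
  have hxv : x ≠ v := fun h => (Finset.mem_sdiff.1 hx).2 (h ▸ self_mem_closedNbhdIn)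
  obtain ⟨y, hy, hxy⟩ := hins.2.2 x (Finset.mem_sdiff.1 hx).1 (by simp [hxv, hxT])
  rcases Finset.mem_insert.1 hy with rfl | hy
  · exact absurd hxy.symm (not_adj_of_mem_sdiff_closedNbhdIn hx)
  · exact ⟨y, hy, hxy⟩

lemma IsSimplicialIn.not_adj_of_mem_isIndepSet (hv : G.IsSimplicialIn A v) (hTA : T ⊆ A)
    (hT : G.IsIndepSet (T : Set V)) {z : V} (hz : z ∈ T) (hzv : z ∈ G.closedNbhdIn A v) :
    ∀ t ∈ T, t ≠ z → ¬G.Adj v t := fun _ ht htz h =>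
  hT ht hz htz (hv.2 (mem_closedNbhdIn.2 (.inr ⟨hTA ht, h⟩)) hzv htz)

theorem WellCoveredOn.disjoint_closedNbhdIn (hA : G.WellCoveredOn A) (hv : G.IsSimplicialIn A v)
    (hw : G.IsSimplicialIn A w) (hne : G.closedNbhdIn A v ≠ G.closedNbhdIn A w) :
    Disjoint (G.closedNbhdIn A v) (G.closedNbhdIn A w) := by
  rw [Finset.disjoint_left]
  intro z hzv hzw
  have hvw : ¬G.Adj v w := fun h => hne (hv.closedNbhdIn_eq_of_adj hw h)
  have hvw' : v ≠ w := by rintro rfl; exact hne rfl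
  have hvz : G.Adj v z := by
    rcases mem_closedNbhdIn.1 hzv with rfl | ⟨-, h⟩
    · rcases mem_closedNbhdIn.1 hzw with h | ⟨-, h⟩
      exacts [absurd h hvw', absurd h.symm hvw]
    · exact h
  have hwz : G.Adj w z := by
    rcases mem_closedNbhdIn.1 hzw with rfl | ⟨-, h⟩
    · rcases mem_closedNbhdIn.1 hzv with h | ⟨-, h⟩
      exacts [absurd h hvw'.symm, absurd h hvw]
    · exact h
  obtain ⟨T, hzT, hT⟩ := exists_isMaximalIndepSetIn_superset (S := {z})
    (Finset.singleton_subset_iff.2 (closedNbhdIn_subset hv.1 hzv)) (by simp)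
  replace hzT : z ∈ T := hzT (Finset.mem_singleton_self z)
  have hvT := hv.not_adj_of_mem_isIndepSet hT.1 hT.2.1 hzT hzv
  have hwT := hw.not_adj_of_mem_isIndepSet hT.1 hT.2.1 hzT hzw
  have hvT' : v ∉ insert w (T.erase z) := by
    rw [Finset.mem_insert]
    rintro (h | h)
    exacts [hvw' h, hT.2.1 (Finset.mem_of_mem_erase h) hzT hvz.ne hvz]
  have hwT' : w ∉ T.erase z := fun h => hT.2.1 (Finset.mem_of_mem_erase h) hzT hwz.ne hwz
  have hI : G.IsIndepSet (↑(insert v (insert w (T.erase z))) : Set V) := by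
    simp only [Finset.coe_insert]
    refine isIndepSet_insert_of_forall (isIndepSet_insert_of_forall
      (hT.2.1.mono (Finset.coe_subset.2 (Finset.erase_subset _ _))) fun t ht =>
        hwT t (Finset.mem_of_mem_erase ht) (Finset.ne_of_mem_erase ht)) ?_
    rintro t (rfl | ht)
    exacts [hvw, hvT t (Finset.mem_of_mem_erase ht) (Finset.ne_of_mem_erase ht)]
  have hIA : insert v (insert w (T.erase z)) ⊆ A := Finset.insert_subset hv.1
    (Finset.insert_subset hw.1 ((Finset.erase_subset _ _).trans hT.1))
  have := hA.card_le hT hIA hI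
  rw [Finset.card_insert_of_notMem hvT', Finset.card_insert_of_notMem hwT',
    Finset.card_erase_of_mem hzT] at this
  have := Finset.card_pos.2 ⟨z, hzT⟩
  omega

end IndependentSets

section Simplicial

variable (G) in
noncomputable def componentIn (X : Finset V) (c : V) : Finset V :=
  {x ∈ X | ∃ p : G.Walk c x, ∀ y ∈ p.support, y ∈ X}

variable {A X : Finset V} {a c x y : V}

lemma self_mem_componentIn (hc : c ∈ X) : c ∈ G.componentIn X c :=
  Finset.mem_filter.2 ⟨hc, .nil, by simpa using hc⟩

lemma componentIn_subset : G.componentIn X c ⊆ X :=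
  Finset.filter_subset _ _

lemma mem_componentIn_of_adj (hx : x ∈ G.componentIn X c) (hy : y ∈ X) (h : G.Adj x y) :
    y ∈ G.componentIn X c := by
  obtain ⟨-, p, hp⟩ := Finset.mem_filter.1 hx
  refine Finset.mem_filter.2 ⟨hy, p.concat h, fun z hz => ?_⟩
  rw [Walk.support_concat, List.mem_append, List.mem_singleton] at hz
  exact hz.elim (hp z) (· ▸ hy)

lemma exists_walk_of_mem_componentIn (hx : x ∈ G.componentIn X c)
    (hy : y ∈ G.componentIn X c) : ∃ p : G.Walk x y, ∀ z ∈ p.support, z ∈ X := by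
  obtain ⟨-, p, hp⟩ := Finset.mem_filter.1 hx
  obtain ⟨-, q, hq⟩ := Finset.mem_filter.1 hy
  refine ⟨p.reverse.append q, fun z hz => ?_⟩
  rw [Walk.mem_support_append_iff, Walk.support_reverse, List.mem_reverse] at hz
  exact hz.elim (hp z) (hq z)

theorem IsChordal.isClique_adj_componentIn (hG : G.IsChordal) (haX : a ∉ X)
    (hX : ∀ x ∈ X, ¬G.Adj a x) :
    G.IsClique {s | G.Adj a s ∧ ∃ x ∈ G.componentIn X c, G.Adj s x} := by
  rintro s₁ ⟨has₁, x₁, hx₁, hs₁x₁⟩ s₂ ⟨has₂, x₂, hx₂, hs₂x₂⟩ hne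
  by_contra hnadj
  obtain ⟨p, hp⟩ := exists_walk_of_mem_componentIn hx₁ hx₂
  have hsupp : ∀ x ∈ (Walk.cons hs₁x₁ (p.concat hs₂x₂.symm)).support,
      x = s₁ ∨ x ∈ X ∨ x = s₂ := by
    intro x hx
    simp only [Walk.support_cons, Walk.support_concat, List.mem_cons, List.mem_append,
      List.not_mem_nil, or_false] at hx
    exact hx.imp_right (Or.imp_left (hp x))
  obtain ⟨x, hx, hxs₁, hxs₂, hax⟩ := hG.exists_adj_of_walk _ has₁ has₂ hne hnadj
    fun ha => (hsupp a ha).elim has₁.ne (Or.elim · haX has₂.ne)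
  exact ((hsupp x hx).resolve_left hxs₁).elim (hX x · hax) hxs₂

lemma exists_isSimplicialIn_not_mem_of_isClique {S : Set V}
    (hA : ∀ a ∈ A, ∀ b ∈ A, b ∉ G.closedNbhdIn A a →
      ∃ v ∉ G.closedNbhdIn A a, G.IsSimplicialIn A v)
    (hS : G.IsClique S) (hc : c ∈ A) (hcS : c ∉ S) : ∃ v ∉ S, G.IsSimplicialIn A v := by
  by_cases hAc : G.IsClique (A : Set V)
  · exact ⟨c, hcS, hc, hAc.subset (Finset.coe_subset.2 (closedNbhdIn_subset hc))⟩
  obtain ⟨x, hx, y, hy, hxy, hnxy⟩ : ∃ x ∈ A, ∃ y ∈ A, x ≠ y ∧ ¬G.Adj x y := by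
    simpa [IsClique, Set.Pairwise] using hAc
  obtain ⟨v₁, hv₁x, hv₁⟩ := hA x hx y hy (by simp [mem_closedNbhdIn, hxy.symm, hnxy])
  refine (em (v₁ ∈ S)).elim (fun hv₁S => ?_) fun hv₁S => ⟨v₁, hv₁S, hv₁⟩
  -- a second simplicial vertex, away from `N[v₁] ⊇ S`
  have hxv₁ : x ∉ G.closedNbhdIn A v₁ := by
    simp only [mem_closedNbhdIn, not_or, not_and] at hv₁x ⊢
    exact ⟨Ne.symm hv₁x.1, fun _ h => hv₁x.2 hv₁.1 h.symm⟩
  obtain ⟨v₂, hv₂v₁, hv₂⟩ := hA v₁ hv₁.1 x hx hxv₁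
  refine ⟨v₂, fun hv₂S => hv₂v₁ ?_, hv₂⟩
  exact mem_closedNbhdIn.2
    ((eq_or_ne v₂ v₁).imp id fun h => ⟨hv₂.1, hS hv₁S hv₂S h.symm⟩)

/-- Dirac's lemma. The neighbours `S` of `a` seeing the component `C` of `b` outside `N[a]` form
a clique separating `C` from `a`, and a simplicial vertex of `C ∪ S` outside `S` is simplicial
in `A`. -/
theorem IsChordal.exists_isSimplicialIn_not_mem_closedNbhdIn (hG : G.IsChordal) (A : Finset V) :
    ∀ a ∈ A, ∀ b ∈ A, b ∉ G.closedNbhdIn A a →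
      ∃ v ∉ G.closedNbhdIn A a, G.IsSimplicialIn A v := by
  induction A using Finset.strongInduction with
  | H A ih =>
  intro a ha b hb hbN
  set X := A \ G.closedNbhdIn A a
  set C := G.componentIn X b
  set S := {s ∈ A | G.Adj a s ∧ ∃ x ∈ C, G.Adj s x}
  have haX : a ∉ X := fun h => (Finset.mem_sdiff.1 h).2 self_mem_closedNbhdIn
  have hS : G.IsClique (S : Set V) :=
    (hG.isClique_adj_componentIn haX fun _ => not_adj_of_mem_sdiff_closedNbhdIn).subset
      fun s hs => (Finset.mem_filter.1 hs).2
  have hCX : C ⊆ X := componentIn_subset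
  have hbS : b ∉ S := fun h =>
    hbN (mem_closedNbhdIn.2 (.inr ⟨hb, (Finset.mem_filter.1 h).2.1⟩))
  have hCS : ∀ x ∈ C, ∀ y ∈ G.closedNbhdIn A x, y ∈ C ∪ S := by
    intro x hx y hy
    rcases mem_closedNbhdIn.1 hy with rfl | ⟨hyA, hxy⟩
    · exact Finset.mem_union_left _ hx
    by_cases hyN : y ∈ G.closedNbhdIn A a
    · rcases mem_closedNbhdIn.1 hyN with rfl | ⟨-, hay⟩
      · exact absurd hxy.symm (not_adj_of_mem_sdiff_closedNbhdIn (hCX hx))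
      · exact Finset.mem_union_right _ (Finset.mem_filter.2 ⟨hyA, hay, x, hx, hxy.symm⟩)
    · exact Finset.mem_union_left _
        (mem_componentIn_of_adj hx (Finset.mem_sdiff.2 ⟨hyA, hyN⟩) hxy)
  have hCSA : C ∪ S ⊂ A := by
    refine Finset.ssubset_iff_of_subset (Finset.union_subset
      (hCX.trans Finset.sdiff_subset) (Finset.filter_subset _ _)) |>.2 ⟨a, ha, ?_⟩
    rw [Finset.mem_union]
    exact fun h => h.elim (haX ∘ (hCX ·)) fun h => G.irrefl (Finset.mem_filter.1 h).2.1
  obtain ⟨v, hvS, hv⟩ := exists_isSimplicialIn_not_mem_of_isClique (ih _ hCSA) hS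
    (Finset.mem_union_left _ (self_mem_componentIn (Finset.mem_sdiff.2 ⟨hb, hbN⟩))) hbS
  have hvC : v ∈ C := (Finset.mem_union.1 hv.1).resolve_right hvS
  refine ⟨v, (Finset.mem_sdiff.1 (hCX hvC)).2, hCSA.1 hv.1, hv.2.subset fun y hy => ?_⟩
  rcases mem_closedNbhdIn.1 hy with rfl | ⟨-, hvy⟩
  · exact self_mem_closedNbhdIn
  · exact mem_closedNbhdIn.2 (.inr ⟨hCS v hvC y hy, hvy⟩)

theorem IsChordal.exists_isSimplicialIn (hG : G.IsChordal) (hA : A.Nonempty) :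
    ∃ v, G.IsSimplicialIn A v := by
  obtain ⟨c, hc⟩ := hA
  obtain ⟨v, -, hv⟩ := exists_isSimplicialIn_not_mem_of_isClique
    (hG.exists_isSimplicialIn_not_mem_closedNbhdIn A) (Set.pairwise_empty _) hc (Set.notMem_empty c)
  exact ⟨v, hv⟩

end Simplicial

section Covering

variable {A : Finset V} {u v : V}

lemma WellCoveredOn.not_dominates_closedNbhdIn_sdiff (hA : G.WellCoveredOn A)
    (hv : G.IsSimplicialIn A v) (hu : u ∈ A \ G.closedNbhdIn A v) {I : Finset V}
    (hIA : I ⊆ A) (hI : G.IsIndepSet (I : Set V))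
    (hdom : ∀ s ∈ G.closedNbhdIn (A \ G.closedNbhdIn A v) u, ∃ i ∈ I, G.Adj s i) :
    False := by
  obtain ⟨T, hIT, hT⟩ := exists_isMaximalIndepSetIn_superset hIA hI
  obtain ⟨w, hwT, hwS⟩ := (hT.sdiff_closedNbhdIn hA hv).exists_mem_closedNbhdIn hu
  obtain ⟨i, hi, hwi⟩ := hdom w hwS
  exact hT.2.1 (Finset.mem_sdiff.1 hwT).1 (hIT hi) hwi.ne hwi

/-- The four-cycle `r y b u` has no chord `r b`, and a chord `y u` would put `y` into `N[u]`. -/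
theorem IsChordal.not_adj_of_adj_of_not_mem_closedNbhdIn (hG : G.IsChordal) {r b y : V}
    (hr : r ∈ G.closedNbhdIn A u) (hub : G.Adj u b) (hrb : ¬G.Adj r b) (hrb' : r ≠ b)
    (hy : y ∈ A) (hyu : y ∉ G.closedNbhdIn A u) (hry : G.Adj r y) : ¬G.Adj b y := by
  intro hby
  have hur : G.Adj u r := ((mem_closedNbhdIn.1 hr).resolve_left (by rintro rfl; exact hrb hub)).2
  have hyu' : y ≠ u := fun h => hyu (h ▸ self_mem_closedNbhdIn)
  exact (hG.adj_or_adj_of_cycle_four hry hby.symm hub.symm hur hrb' hyu').elim hrb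
    fun h => hyu (mem_closedNbhdIn.2 (.inr ⟨hy, h.symm⟩))

/-- If every free vertex of `S = N[u]` had a neighbour in `F = N[v]`, some `b ∈ F` would see all
of them, the other vertices of `S` would be dominated from outside `S` by an independent set `J`
not seeing `b`, and `insert b J` would dominate `S`. -/
theorem IsChordal.exists_free_not_adj_closedNbhdIn (hG : G.IsChordal) (hA : G.WellCoveredOn A)
    (hv : G.IsSimplicialIn A v) (hu : G.IsSimplicialIn (A \ G.closedNbhdIn A v) u) :
    ∃ p ∈ G.closedNbhdIn (A \ G.closedNbhdIn A v) u,
      G.closedNbhdIn (A \ G.closedNbhdIn A v) p ⊆ G.closedNbhdIn (A \ G.closedNbhdIn A v) u ∧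
      ∀ f ∈ G.closedNbhdIn A v, ¬G.Adj p f := by
  set F := G.closedNbhdIn A v
  set A' := A \ F
  set S := G.closedNbhdIn A' u
  by_contra! hP
  have hSA' : S ⊆ A' := closedNbhdIn_subset hu.1
  set P := {p ∈ S | G.closedNbhdIn A' p ⊆ S}
  have huP : u ∈ P := Finset.mem_filter.2 ⟨self_mem_closedNbhdIn, subset_rfl⟩
  obtain ⟨b, hbF, hPb⟩ := hG.exists_adj_forall_of_isClique (K := P) (W := F)
    (hu.2.subset (Finset.coe_subset.2 (Finset.filter_subset _ _))) hv.2
    (Finset.disjoint_of_subset_left ((Finset.filter_subset _ _).trans hSA') Finset.sdiff_disjoint)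
    ⟨u, huP⟩ fun p hp => hP p (Finset.mem_filter.1 hp).1 (Finset.mem_filter.1 hp).2
  set R := {r ∈ S | ¬G.Adj r b}
  set W := {y ∈ A' \ S | ¬G.Adj b y}
  have hRW : ∀ r ∈ R, ∃ y ∈ W, G.Adj r y := by
    intro r hr
    obtain ⟨hrS, hrb⟩ := Finset.mem_filter.1 hr
    obtain ⟨y, hyN, hyS⟩ :=
      Finset.not_subset.1 fun h => hrb (hPb r (Finset.mem_filter.2 ⟨hrS, h⟩))
    obtain ⟨hyA', hry⟩ := (mem_closedNbhdIn.1 hyN).resolve_left (by rintro rfl; exact hyS hrS)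
    have hrb' : r ≠ b := fun h => (Finset.mem_sdiff.1 (hSA' hrS)).2 (h ▸ hbF)
    exact ⟨y, Finset.mem_filter.2 ⟨Finset.mem_sdiff.2 ⟨hyA', hyS⟩,
      hG.not_adj_of_adj_of_not_mem_closedNbhdIn hrS (hPb u huP) hrb hrb' hyA' hyS hry⟩, hry⟩
  obtain ⟨J, hJW, hJ, hJR⟩ := hG.exists_isIndepSet_dominating
    (hu.2.subset (Finset.coe_subset.2 (Finset.filter_subset _ _)))
    (Finset.disjoint_of_subset_left (Finset.filter_subset _ _)
      (Finset.disjoint_of_subset_right (Finset.filter_subset _ _) Finset.disjoint_sdiff)) hRW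
  refine hA.not_dominates_closedNbhdIn_sdiff hv hu.1 (I := insert b J)
    (Finset.insert_subset (closedNbhdIn_subset hv.1 hbF)
      (hJW.trans ((Finset.filter_subset _ _).trans
        (Finset.sdiff_subset.trans Finset.sdiff_subset))))
    (by rw [Finset.coe_insert]; exact isIndepSet_insert_of_forall hJ fun j hj =>
      (Finset.mem_filter.1 (hJW hj)).2) fun s hs => ?_
  by_cases hsb : G.Adj s b
  · exact ⟨b, Finset.mem_insert_self b J, hsb⟩
  · obtain ⟨j, hj, hsj⟩ := hJR s (Finset.mem_filter.2 ⟨hs, hsb⟩)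
    exact ⟨j, Finset.mem_insert_of_mem hj, hsj⟩

theorem IsChordal.exists_isSimplicialIn_mem_closedNbhdIn (hG : G.IsChordal)
    (hA : G.WellCoveredOn A) {z : V} (hz : z ∈ A) :
    ∃ u, G.IsSimplicialIn A u ∧ z ∈ G.closedNbhdIn A u := by
  induction A using Finset.strongInduction generalizing z with
  | H A ih =>
  obtain ⟨v, hv⟩ := hG.exists_isSimplicialIn ⟨z, hz⟩
  by_cases hzF : z ∈ G.closedNbhdIn A v
  · exact ⟨v, hv, hzF⟩
  set A' := A \ G.closedNbhdIn A v
  obtain ⟨u, hu, hzu⟩ := ih A'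
    (Finset.sdiff_ssubset (closedNbhdIn_subset hv.1) ⟨v, self_mem_closedNbhdIn⟩)
    (hA.sdiff_closedNbhdIn hv.1) (Finset.mem_sdiff.2 ⟨hz, hzF⟩)
  obtain ⟨p, hpS, hpN, hpF⟩ := hG.exists_free_not_adj_closedNbhdIn hA hv hu
  have hpA' : p ∈ A' := closedNbhdIn_subset hu.1 hpS
  have hNp : G.closedNbhdIn A p ⊆ G.closedNbhdIn A' u := fun y hy => hpN <| by
    rcases mem_closedNbhdIn.1 hy with rfl | ⟨hyA, hpy⟩
    · exact self_mem_closedNbhdIn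
    · exact mem_closedNbhdIn.2
        (.inr ⟨Finset.mem_sdiff.2 ⟨hyA, fun hyF => hpF y hyF hpy⟩, hpy⟩)
  refine ⟨p, ⟨Finset.sdiff_subset hpA', hu.2.subset (Finset.coe_subset.2 hNp)⟩, ?_⟩
  exact hu.2.subset_closedNbhdIn ((closedNbhdIn_subset hu.1).trans Finset.sdiff_subset) hpS hzu

end Covering

section Facets

variable [Fintype V] {v : V}

lemma exists_isFacet_superset {K : Finset V} (hK : G.IsClique (K : Set V)) :
    ∃ F, G.IsFacet F ∧ K ⊆ F := by
  obtain ⟨F, hKF, hF⟩ :=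
    Finite.exists_le_maximal (p := fun F : Finset V => G.IsClique (F : Set V)) hK
  exact ⟨F, ⟨hF.1, fun F' hF' hFF' => le_antisymm (hF.2 hF' hFF') hFF'⟩, hKF⟩

lemma IsSimplicialIn.isFreeFacet (hv : G.IsSimplicialIn Finset.univ v) :
    G.IsFreeFacet (G.closedNbhdIn Finset.univ v) := by
  have hsub (F : Finset V) (hF : G.IsClique (F : Set V)) (hvF : v ∈ F) :
      F ⊆ G.closedNbhdIn Finset.univ v :=
    hF.subset_closedNbhdIn (Finset.subset_univ F) hvF
  refine ⟨⟨hv.2, fun F hF h => (hsub F hF (h self_mem_closedNbhdIn)).antisymm h⟩,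
    v, self_mem_closedNbhdIn, fun F hF hvF => (hF.2 _ hv.2 (hsub F hF.1 hvF)).symm⟩

lemma IsFreeFacet.exists_isSimplicialIn {F : Finset V} (hF : G.IsFreeFacet F) :
    ∃ v, G.IsSimplicialIn Finset.univ v ∧ G.closedNbhdIn Finset.univ v = F := by
  obtain ⟨hFc, v, hvF, hvfree⟩ := hF
  have hNF : G.closedNbhdIn Finset.univ v ⊆ F := by
    intro x hx
    rcases mem_closedNbhdIn.1 hx with rfl | ⟨-, hvx⟩
    · exact hvF
    obtain ⟨F', hF', hvxF'⟩ := exists_isFacet_superset (K := {v, x})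
      (by rw [Finset.coe_pair]; exact G.isClique_pair.2 fun _ => hvx)
    exact hvfree F' hF' (hvxF' (by simp)) ▸ hvxF' (by simp)
  have heq := hNF.antisymm (hFc.1.subset_closedNbhdIn (Finset.subset_univ F) hvF)
  exact ⟨v, ⟨Finset.mem_univ v, heq ▸ hFc.1⟩, heq⟩

lemma IsMaximalIndepSetIn.isMinVertexCover_compl {T : Finset V}
    (hT : G.IsMaximalIndepSetIn Finset.univ T) : G.IsMinVertexCover Tᶜ := by
  refine ⟨fun x y hxy => ?_, fun C hC hCov => hC.antisymm fun x hx => ?_⟩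
  · by_contra! h
    simp only [Finset.mem_compl, not_not] at h
    exact hT.2.1 h.1 h.2 hxy.ne hxy
  · obtain ⟨y, hyT, hxy⟩ := hT.2.2 x (Finset.mem_univ x) (Finset.mem_compl.1 hx)
    exact (hCov x y hxy).resolve_right fun hy => Finset.mem_compl.1 (hC hy) hyT

lemma Unmixed.wellCoveredOn_univ (h : G.Unmixed) : G.WellCoveredOn Finset.univ := by
  intro S T hS hT
  have := h _ _ hS.isMinVertexCover_compl hT.isMinVertexCover_compl
  rw [Finset.card_compl, Finset.card_compl] at this
  have := Finset.card_le_univ S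
  have := Finset.card_le_univ T
  omega

end Facets

end SimpleGraph

theorem unmixed_chordal_partition_general {n : ℕ} (G : SimpleGraph (Fin n))
    (hchordal : G.IsChordal)
    (hunmixed : G.Unmixed) {m : ℕ} (F : Fin m → Finset (Fin n))
    (hFfree : ∀ i, G.IsFreeFacet (F i)) (hFinj : Function.Injective F)
    (hFall : ∀ F' : Finset (Fin n), G.IsFreeFacet F' → ∃ i, F' = F i) :
    (∀ i j, i ≠ j → Disjoint (F i) (F j)) ∧ ∀ v : Fin n, ∃ i, v ∈ F i := by
  have hA := hunmixed.wellCoveredOn_univ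
  refine ⟨fun i j hij => ?_, fun v => ?_⟩
  · obtain ⟨vi, hvi, hi⟩ := (hFfree i).exists_isSimplicialIn
    obtain ⟨vj, hvj, hj⟩ := (hFfree j).exists_isSimplicialIn
    rw [← hi, ← hj]
    exact hA.disjoint_closedNbhdIn hvi hvj (hi ▸ hj ▸ hFinj.ne hij)
  · obtain ⟨u, hu, hvu⟩ :=
      hchordal.exists_isSimplicialIn_mem_closedNbhdIn hA (Finset.mem_univ v)
    obtain ⟨i, hi⟩ := hFall _ hu.isFreeFacet
    exact ⟨i, hi ▸ hvu⟩

/-- If `G` is an unmixed chordal graph on `[n]` and `F_1,…,F_m` are the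
facets of `Δ(G)` admitting a free vertex, then `[n]` is the disjoint union of `F_1,…,F_m`. -/
theorem unmixed_chordal_partition {n : ℕ} (G : SimpleGraph (Fin n))
    (hchordal : G.IsChordal) (hiso : ∀ v : Fin n, ∃ w, G.Adj v w)
    (hunmixed : G.Unmixed) {m : ℕ} (F : Fin m → Finset (Fin n))
    (hFfree : ∀ i, G.IsFreeFacet (F i)) (hFinj : Function.Injective F)
    (hFall : ∀ F' : Finset (Fin n), G.IsFreeFacet F' → ∃ i, F' = F i) :
    (∀ i j, i ≠ j → Disjoint (F i) (F j)) ∧ ∀ v : Fin n, ∃ i, v ∈ F i :=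
  unmixed_chordal_partition_general G hchordal hunmixed F hFfree hFinj hFall
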